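/- arXiv:1802.04724 — 6 statements merged into one kernel-verified Lean document; each statement's English description precedes it below -/
import Mathlib

section
/- Let μ > 0, B ≥ 1 an integer, 0 < τ_B ≤ τ_{B−1} ≤ … ≤ τ_1 < ∞, and j ∈ {0,…,B−1}. Then the piecewise function F_j given by F_j(x) = 0 for x < τ_B, F_j(x) = G_{m−j}(x) for τ_m ≤ x < τ_{m−1} (m = 2,…,B), and F_j(x) = G_{1−j}(x) for x ≥ τ_1 is nondecreasing on ℝ and takes values in [0,1], i.e., it is a valid cumulative distribution function. -/
/-- The Erlang CDF `G_m` with rate `μ` and (integer) stage parameter `m`: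
`G_m(t) = 1 - e^(-μt) ∑_{k=0}^{m-1} (μt)^k / k!` for `t ≥ 0` and `m ≥ 1`,
with the conventions `G_m(t) = 0` for `t < 0` and `G_m(t) = 1` for `t ≥ 0` when `m ≤ 0`. -/
noncomputable def erlangCDF (μ : ℝ) (m : ℤ) (t : ℝ) : ℝ :=
  if t < 0 then 0
  else if m ≤ 0 then 1
  else 1 - Real.exp (-(μ * t)) *
    ∑ k ∈ Finset.range m.toNat, (μ * t) ^ k / (Nat.factorial k : ℝ)

/-- The inter-update CDF `F_j` of a monotone threshold policy with battery size `B`,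
thresholds `τ B ≤ τ (B-1) ≤ … ≤ τ 1` and post-update energy level `j`:
`F_j(x) = 0` for `x < τ B`, `F_j(x) = G_{m-j}(x)` for `τ m ≤ x < τ (m-1)` (`m = 2,…,B`)
and `F_j(x) = G_{1-j}(x)` for `x ≥ τ 1`.  (For `x ≥ τ B`, the region index `m`, i.e. the
smallest `m ∈ {1,…,B}` with `τ m ≤ x`, is expressed as an `sInf`.) -/
noncomputable def interUpdateCDF (μ : ℝ) (B : ℕ) (τ : ℕ → ℝ) (j : ℕ) (x : ℝ) : ℝ :=
  if x < τ B then 0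
  else erlangCDF μ
    ((sInf {m : ℕ | 1 ≤ m ∧ m ≤ B ∧ τ m ≤ x} : ℕ) - (j : ℤ)) x

open Finset Real
open scoped Nat

/-- The probability that a Poisson variable of mean `s` is less than `n`, i.e. that fewer than
`n` events of a unit-rate Poisson process occur by time `s`; hence
`erlangCDF μ m t = 1 - poissonProbLt m (μ * t)` for `t ≥ 0`. -/
noncomputable def poissonProbLt (n : ℕ) (s : ℝ) : ℝ :=
  exp (-s) * ∑ k ∈ range n, s ^ k / (k ! : ℝ)

section poissonProbLt

variable {n : ℕ} {s : ℝ}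

lemma poissonProbLt_nonneg (hs : 0 ≤ s) : 0 ≤ poissonProbLt n s :=
  mul_nonneg (exp_nonneg _) (sum_nonneg fun k _ => by positivity)

lemma poissonProbLt_le_one (hs : 0 ≤ s) : poissonProbLt n s ≤ 1 :=
  calc poissonProbLt n s ≤ exp (-s) * exp s :=
        mul_le_mul_of_nonneg_left (sum_le_exp_of_nonneg hs n) (exp_nonneg _)
    _ = 1 := by rw [← exp_add, neg_add_cancel, exp_zero]

lemma poissonProbLt_mono {n' : ℕ} (hs : 0 ≤ s) (h : n ≤ n') :
    poissonProbLt n s ≤ poissonProbLt n' s :=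
  mul_le_mul_of_nonneg_left
    (sum_le_sum_of_subset_of_nonneg (range_mono h) fun k _ _ => by positivity) (exp_nonneg _)

/-- The derivative telescopes: differentiating the new term `exp (-s) s^(n+1) / (n+1)!` gives
`exp (-s) s^n / n! - exp (-s) s^(n+1) / (n+1)!`. -/
lemma hasDerivAt_poissonProbLt_succ (n : ℕ) (s : ℝ) :
    HasDerivAt (poissonProbLt (n + 1)) (-(exp (-s) * s ^ n / n !)) s := by
  induction n with
  | zero =>
    have hfun : poissonProbLt 1 = fun s => exp (-s) := by ext; simp [poissonProbLt]
    rw [hfun]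
    simpa using (hasDerivAt_neg s).exp
  | succ n ih =>
    have hsplit : poissonProbLt (n + 2) =
        fun s => poissonProbLt (n + 1) s + exp (-s) * (s ^ (n + 1) / ((n + 1) ! : ℝ)) := by
      ext s
      simp only [poissonProbLt, sum_range_succ _ (n + 1), mul_add]
    rw [hsplit]
    refine (ih.add ((hasDerivAt_neg s).exp.mul
      ((hasDerivAt_pow (n + 1) s).div_const _))).congr_deriv ?_
    rw [Nat.factorial_succ]
    push_cast
    field_simp
    ring

lemma poissonProbLt_antitoneOn (n : ℕ) : AntitoneOn (poissonProbLt n) (Set.Ici 0) := by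
  cases n with
  | zero => intro _ _ _ _ _; simp [poissonProbLt]
  | succ n =>
    have hderiv := fun s => hasDerivAt_poissonProbLt_succ n s
    refine antitoneOn_of_deriv_nonpos (convex_Ici 0)
      (fun s _ => (hderiv s).continuousAt.continuousWithinAt)
      (fun s _ => (hderiv s).differentiableAt.differentiableWithinAt) fun s hs => ?_
    rw [interior_Ici] at hs
    rw [(hderiv s).deriv, neg_nonpos]
    exact div_nonneg (mul_nonneg (exp_nonneg _) (pow_nonneg (le_of_lt hs) n)) (by positivity)

end poissonProbLt

section erlangCDF

variable {μ : ℝ} {m : ℤ} {t : ℝ}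

lemma erlangCDF_of_neg (ht : t < 0) : erlangCDF μ m t = 0 := if_pos ht

/-- For `m ≤ 0` the sum is empty, so the convention `G_m = 1` on `t ≥ 0` is included. -/
lemma erlangCDF_of_nonneg (ht : 0 ≤ t) :
    erlangCDF μ m t = 1 - poissonProbLt m.toNat (μ * t) := by
  rw [erlangCDF, if_neg ht.not_gt]
  split_ifs with hm
  · simp [poissonProbLt, Int.toNat_eq_zero.mpr hm]
  · rfl

lemma erlangCDF_mem_Icc (hμ : 0 ≤ μ) (m : ℤ) (t : ℝ) :
    erlangCDF μ m t ∈ Set.Icc 0 1 := by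
  rcases lt_or_ge t 0 with ht | ht
  · simp [erlangCDF_of_neg ht]
  · have hμt := mul_nonneg hμ ht
    rw [erlangCDF_of_nonneg ht, Set.mem_Icc, sub_nonneg, sub_le_self_iff]
    exact ⟨poissonProbLt_le_one hμt, poissonProbLt_nonneg hμt⟩

lemma erlangCDF_antitone_stage (hμ : 0 ≤ μ) (t : ℝ) :
    Antitone fun m => erlangCDF μ m t := by
  intro m₁ m₂ hm
  rcases lt_or_ge t 0 with ht | ht
  · simp [erlangCDF_of_neg ht]
  · dsimp only
    rw [erlangCDF_of_nonneg ht, erlangCDF_of_nonneg ht, sub_le_sub_iff_left]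
    exact poissonProbLt_mono (mul_nonneg hμ ht) (Int.toNat_le_toNat hm)

lemma erlangCDF_monotone (hμ : 0 ≤ μ) (m : ℤ) : Monotone (erlangCDF μ m) := by
  intro t₁ t₂ ht
  rcases lt_or_ge t₁ 0 with ht₁ | ht₁
  · rw [erlangCDF_of_neg ht₁]
    exact (erlangCDF_mem_Icc hμ m t₂).1
  · have ht₂ := ht₁.trans ht
    rw [erlangCDF_of_nonneg ht₁, erlangCDF_of_nonneg ht₂, sub_le_sub_iff_left]
    exact poissonProbLt_antitoneOn m.toNat (mul_nonneg hμ ht₁) (mul_nonneg hμ ht₂)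
      (mul_le_mul_of_nonneg_left ht hμ)

end erlangCDF

section interUpdateCDF

variable {μ : ℝ} {B : ℕ} {τ : ℕ → ℝ} {j : ℕ}

lemma interUpdateCDF_mem_Icc (hμ : 0 ≤ μ) (x : ℝ) :
    interUpdateCDF μ B τ j x ∈ Set.Icc 0 1 := by
  unfold interUpdateCDF
  split_ifs
  · simp
  · exact erlangCDF_mem_Icc hμ _ x

/-- Past `τ B` the region index `sInf {m | 1 ≤ m ≤ B, τ m ≤ x}` decreases as `x` grows,
and a smaller stage parameter gives a larger Erlang CDF. -/
lemma interUpdateCDF_monotone (hμ : 0 ≤ μ) (hB : 1 ≤ B) :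
    Monotone (interUpdateCDF μ B τ j) := by
  intro x y hxy
  unfold interUpdateCDF
  split_ifs with hx hy hy
  · exact le_rfl
  · exact (erlangCDF_mem_Icc hμ _ y).1
  · exact absurd (hxy.trans_lt hy) hx
  · have hindex : sInf {m : ℕ | 1 ≤ m ∧ m ≤ B ∧ τ m ≤ y} ≤
        sInf {m : ℕ | 1 ≤ m ∧ m ≤ B ∧ τ m ≤ x} :=
      csInf_le_csInf' ⟨B, hB, le_rfl, not_lt.mp hx⟩
        fun _ ⟨h1, hmB, hm⟩ => ⟨h1, hmB, hm.trans hxy⟩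
    calc erlangCDF μ ((sInf {m : ℕ | 1 ≤ m ∧ m ≤ B ∧ τ m ≤ x} : ℕ) - (j : ℤ)) x
        ≤ erlangCDF μ
            ((sInf {m : ℕ | 1 ≤ m ∧ m ≤ B ∧ τ m ≤ y} : ℕ) - (j : ℤ)) x :=
          erlangCDF_antitone_stage hμ x (by omega)
      _ ≤ _ := erlangCDF_monotone hμ _ hxy

end interUpdateCDF

theorem interUpdateCDF_isCDF_general (μ : ℝ) (hμ : 0 < μ) (B : ℕ) (hB : 1 ≤ B)
    (τ : ℕ → ℝ) (j : ℕ) :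
    Monotone (interUpdateCDF μ B τ j) ∧
      ∀ x, interUpdateCDF μ B τ j x ∈ Set.Icc (0 : ℝ) 1 :=
  ⟨interUpdateCDF_monotone hμ.le hB, interUpdateCDF_mem_Icc hμ.le⟩

/-- For `μ > 0`, integer `B ≥ 1`, thresholds `0 < τ B ≤ … ≤ τ 1 < ∞` and
`j ∈ {0,…,B-1}`, the piecewise function `F_j` is nondecreasing on `ℝ` with values in `[0,1]`,
i.e. it is a valid cumulative distribution function. -/
theorem interUpdateCDF_isCDF (μ : ℝ) (hμ : 0 < μ) (B : ℕ) (hB : 1 ≤ B)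
    (τ : ℕ → ℝ) (hpos : 0 < τ B)
    (hmono : ∀ m, 1 ≤ m → m < B → τ (m + 1) ≤ τ m)
    (j : ℕ) (hj : j < B) :
    Monotone (interUpdateCDF μ B τ j) ∧
      ∀ x, interUpdateCDF μ B τ j x ∈ Set.Icc (0 : ℝ) 1 :=
  interUpdateCDF_isCDF_general μ hμ B hB τ j
end

section
/- Fix an integer B ≥ 1, an index i with 1 ≤ i ≤ B, thresholds 0 ≤ τ_B ≤ … ≤ τ_1 (with the conventions τ_{B+1} = 0 and τ_0 = +∞), and functions F_1, …, F_B : ℝ → [0,1], each nondecreasing, together with F_{B+1} ≡ 0. Assume τ_{i+1} < τ_i < τ_{i−1}, that F_i and F_{i+1} are continuous at τ_i, and that for the piecewise survival function S(x;τ) defined below the integrals ∫_0^∞ S(x;τ) dx and ∫_0^∞ 2x S(x;τ) dx are finite for τ in a neighborhood of τ_i. Define, as functions of the single parameter τ ∈ (τ_{i+1}, τ_{i−1}) with all other thresholds fixed, S(x;τ) = 1 − F_{k}(x) on each region [τ_k, τ_{k−1}) of the threshold structure in which τ_i is replaced by τ, e1(τ) = ∫_0^∞ S(x;τ) dx and e2(τ)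 = ∫_0^∞ 2x S(x;τ) dx. Then e1 and e2 are differentiable at τ = τ_i and e2′(τ_i) = 2 τ_i · e1′(τ_i). -/
open MeasureTheory

/-- The piecewise survival function associated with a threshold vector `τ` (with the
conventions `τ 0 = +∞`, `τ (B+1) = 0`) and CDF pieces `F 1, …, F B, F (B+1) = 0`:
`S(x) = 1 - F k x` on each region `τ k ≤ x < τ (k-1)`, the region index `k` being the
smallest `m ∈ {1,…,B+1}` with `τ m ≤ x`. -/
noncomputable def pwSurvival (B : ℕ) (τ : ℕ → ℝ) (F : ℕ → ℝ → ℝ) (x : ℝ) : ℝ :=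
  1 - F (sInf {m : ℕ | 1 ≤ m ∧ m ≤ B + 1 ∧ τ m ≤ x}) x

private lemma tau_chain {B : ℕ} {τ : ℕ → ℝ}
    (hmono : ∀ m, 1 ≤ m → m ≤ B → τ (m + 1) ≤ τ m) :
    ∀ k l, 1 ≤ k → k ≤ l → l ≤ B + 1 → τ l ≤ τ k := by
  intro k l hk hkl hl
  induction l with
  | zero => omega
  | succ n ih =>
    rcases Nat.lt_or_ge k (n + 1) with h | h
    · calc τ (n + 1) ≤ τ n := hmono n (by omega) (by omega)
        _ ≤ τ k := ih (by omega) (by omega)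
    · have hk' : k = n + 1 := by omega
      simp [hk']

private lemma sInf_region_eq {B : ℕ} (σ : ℕ → ℝ) (k : ℕ) (x : ℝ)
    (hk1 : 1 ≤ k) (hk : k ≤ B + 1) (hx : σ k ≤ x)
    (hlt : ∀ m, 1 ≤ m → m < k → x < σ m) :
    sInf {m : ℕ | 1 ≤ m ∧ m ≤ B + 1 ∧ σ m ≤ x} = k := by
  have hmem : k ∈ {m : ℕ | 1 ≤ m ∧ m ≤ B + 1 ∧ σ m ≤ x} := ⟨hk1, hk, hx⟩
  refine le_antisymm (Nat.sInf_le hmem) (le_csInf ⟨k, hmem⟩ ?_)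
  intro m hm
  by_contra h
  push_neg at h
  exact absurd hm.2.2 (not_le.mpr (hlt m hm.1 h))

private lemma pw_diff {B i : ℕ} (hi1 : 1 ≤ i) (hiB : i ≤ B)
    {τ : ℕ → ℝ} (hmono : ∀ m, 1 ≤ m → m ≤ B → τ (m + 1) ≤ τ m)
    (F : ℕ → ℝ → ℝ)
    {s t : ℝ} (hs : τ (i + 1) < s) (hst : s ≤ t) (ht : 1 < i → t < τ (i - 1))
    (x : ℝ) :
    pwSurvival B (Function.update τ i t) F x - pwSurvival B (Function.update τ i s) F x
      = Set.indicator (Set.Ico s t) (fun y => F i y - F (i + 1) y) x := by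
  have hupper : ∀ m, 1 ≤ m → m < i → x < t → x < τ m := by
    intro m hm1 hmi hxt
    have h1i : 1 < i := by omega
    have : τ (i - 1) ≤ τ m := tau_chain hmono m (i - 1) hm1 (by omega) (by omega)
    linarith [ht h1i]
  rcases lt_or_ge x s with hxs | hsx
  · -- x < s : both sets equal
    have hset : {m : ℕ | 1 ≤ m ∧ m ≤ B + 1 ∧ Function.update τ i t m ≤ x}
        = {m : ℕ | 1 ≤ m ∧ m ≤ B + 1 ∧ Function.update τ i s m ≤ x} := by
      ext m
      simp only [Set.mem_setOf_eq]
      rcases eq_or_ne m i with rfl | hne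
      · simp only [Function.update_self]
        constructor
        · rintro ⟨_, _, h3⟩; linarith
        · rintro ⟨_, _, h3⟩; linarith
      · simp [Function.update_of_ne hne]
    rw [Set.indicator_of_notMem (by simp [Set.mem_Ico]; intro h; linarith)]
    unfold pwSurvival
    rw [hset, sub_self]
  · rcases lt_or_ge x t with hxt | htx
    · -- s ≤ x < t
      have hK1 : sInf {m : ℕ | 1 ≤ m ∧ m ≤ B + 1 ∧ Function.update τ i t m ≤ x} = i + 1 := by
        apply sInf_region_eq _ _ _ (by omega) (by omega)
        · rw [Function.update_of_ne (by omega)]; linarith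
        · intro m hm1 hmi
          rcases eq_or_ne m i with rfl | hne
          · rwa [Function.update_self]
          · rw [Function.update_of_ne hne]
            exact hupper m hm1 (by omega) hxt
      have hK2 : sInf {m : ℕ | 1 ≤ m ∧ m ≤ B + 1 ∧ Function.update τ i s m ≤ x} = i := by
        apply sInf_region_eq _ _ _ (by omega) (by omega)
        · rwa [Function.update_self]
        · intro m hm1 hmi
          rw [Function.update_of_ne (by omega)]
          exact hupper m hm1 hmi hxt
      rw [Set.indicator_of_mem (Set.mem_Ico.mpr ⟨hsx, hxt⟩)]
      unfold pwSurvival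
      rw [hK1, hK2]
      ring
    · -- t ≤ x : both sets equal
      have hset : {m : ℕ | 1 ≤ m ∧ m ≤ B + 1 ∧ Function.update τ i t m ≤ x}
          = {m : ℕ | 1 ≤ m ∧ m ≤ B + 1 ∧ Function.update τ i s m ≤ x} := by
        ext m
        simp only [Set.mem_setOf_eq]
        rcases eq_or_ne m i with rfl | hne
        · simp only [Function.update_self]
          constructor
          · rintro ⟨h1, h2, _⟩; exact ⟨h1, h2, by linarith⟩
          · rintro ⟨h1, h2, _⟩; exact ⟨h1, h2, by linarith⟩
        · simp [Function.update_of_ne hne]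
      rw [Set.indicator_of_notMem (by simp [Set.mem_Ico]; intro h; linarith)]
      unfold pwSurvival
      rw [hset, sub_self]

private lemma integral_diff_eq {B i : ℕ} (hi1 : 1 ≤ i) (hiB : i ≤ B)
    {τ : ℕ → ℝ} (hτtop : τ (B + 1) = 0)
    (hmono : ∀ m, 1 ≤ m → m ≤ B → τ (m + 1) ≤ τ m)
    (F : ℕ → ℝ → ℝ) (w : ℝ → ℝ)
    {s t : ℝ} (hs : τ (i + 1) < s) (hst : s ≤ t) (ht : 1 < i → t < τ (i - 1))
    (h1 : IntegrableOn (fun x => w x * pwSurvival B (Function.update τ i t) F x) (Set.Ioi 0))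
    (h2 : IntegrableOn (fun x => w x * pwSurvival B (Function.update τ i s) F x) (Set.Ioi 0)) :
    (∫ x in Set.Ioi (0 : ℝ), w x * pwSurvival B (Function.update τ i t) F x)
      - ∫ x in Set.Ioi (0 : ℝ), w x * pwSurvival B (Function.update τ i s) F x
      = ∫ x in s..t, w x * (F i x - F (i + 1) x) := by
  have h0s : (0 : ℝ) < s := by
    have : τ (B + 1) ≤ τ (i + 1) := tau_chain hmono (i + 1) (B + 1) (by omega) (by omega) le_rfl
    rw [hτtop] at this; linarith
  rw [← integral_sub h1 h2]
  have key : ∀ x : ℝ,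
      w x * pwSurvival B (Function.update τ i t) F x
        - w x * pwSurvival B (Function.update τ i s) F x
      = Set.indicator (Set.Ico s t) (fun y => w y * (F i y - F (i + 1) y)) x := by
    intro x
    rw [← mul_sub, pw_diff hi1 hiB hmono F hs hst ht x]
    by_cases hx : x ∈ Set.Ico s t
    · rw [Set.indicator_of_mem hx, Set.indicator_of_mem hx]
    · rw [Set.indicator_of_notMem hx, Set.indicator_of_notMem hx, mul_zero]
  simp_rw [key]
  rw [integral_indicator measurableSet_Ico, Measure.restrict_restrict measurableSet_Ico]
  have hsub : Set.Ico s t ∩ Set.Ioi 0 = Set.Ico s t := by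
    apply Set.inter_eq_self_of_subset_left
    intro x hx
    exact lt_of_lt_of_le h0s hx.1
  rw [hsub, setIntegral_congr_set Ico_ae_eq_Ioc, ← intervalIntegral.integral_of_le hst]

private lemma main_aux {B i : ℕ} (hi1 : 1 ≤ i) (hiB : i ≤ B)
    {τ : ℕ → ℝ} (hτtop : τ (B + 1) = 0)
    (hmono : ∀ m, 1 ≤ m → m ≤ B → τ (m + 1) ≤ τ m)
    (hlt : τ (i + 1) < τ i) (hlt' : 1 < i → τ i < τ (i - 1))
    (F : ℕ → ℝ → ℝ)
    (hFmono : ∀ k, 1 ≤ k → k ≤ B → Monotone (F k))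
    (hFtop : ∀ x, F (B + 1) x = 0)
    (hci : ContinuousAt (F i) (τ i))
    (hci' : ContinuousAt (F (i + 1)) (τ i))
    (w : ℝ → ℝ) (hwc : Continuous w)
    (hint : ∀ᶠ t in nhds (τ i),
      IntegrableOn (fun x => w x * pwSurvival B (Function.update τ i t) F x) (Set.Ioi 0)) :
    HasDerivAt
      (fun t => ∫ x in Set.Ioi (0 : ℝ), w x * pwSurvival B (Function.update τ i t) F x)
      (w (τ i) * (F i (τ i) - F (i + 1) (τ i))) (τ i) := by
  have hmeas2 : Measurable (F (i + 1)) := by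
    rcases lt_or_eq_of_le hiB with h | h
    · exact (hFmono (i + 1) (by omega) (by omega)).measurable
    · have : F (i + 1) = fun _ => (0 : ℝ) := by
        funext x; rw [← h] at hFtop; exact hFtop x
      rw [this]; exact measurable_const
  have hgmeas : Measurable (fun x => w x * (F i x - F (i + 1) x)) :=
    hwc.measurable.mul ((hFmono i hi1 hiB).measurable.sub hmeas2)
  have hcg : ContinuousAt (fun x => w x * (F i x - F (i + 1) x)) (τ i) :=
    hwc.continuousAt.mul (hci.sub hci')
  have hFTC : HasDerivAt (fun u => ∫ x in (τ i)..u, w x * (F i x - F (i + 1) x))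
      (w (τ i) * (F i (τ i) - F (i + 1) (τ i))) (τ i) :=
    intervalIntegral.integral_hasDerivAt_right
      ⟨by simp, by simp⟩
      ⟨Set.univ, Filter.univ_mem, hgmeas.aestronglyMeasurable⟩ hcg
  have hupper : ∀ᶠ t in nhds (τ i), (1 < i → t < τ (i - 1)) := by
    by_cases h : 1 < i
    · filter_upwards [Iio_mem_nhds (hlt' h)] with t htt
      intro _; exact htt
    · filter_upwards with t h'; exact absurd h' h
  set C := ∫ x in Set.Ioi (0 : ℝ), w x * pwSurvival B (Function.update τ i (τ i)) F x with hC
  have h0 : IntegrableOn (fun x => w x * pwSurvival B (Function.update τ i (τ i)) F x)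
      (Set.Ioi 0) := hint.self_of_nhds
  have heq : (fun t => ∫ x in Set.Ioi (0 : ℝ), w x * pwSurvival B (Function.update τ i t) F x)
      =ᶠ[nhds (τ i)]
      fun t => C + ∫ x in (τ i)..t, w x * (F i x - F (i + 1) x) := by
    filter_upwards [hint, Ioi_mem_nhds hlt, hupper] with t hIt ht1 ht2
    rcases le_total (τ i) t with h | h
    · have := integral_diff_eq hi1 hiB hτtop hmono F w hlt h ht2 hIt h0
      linarith
    · have := integral_diff_eq hi1 hiB hτtop hmono F w ht1 h hlt' h0 hIt
      rw [intervalIntegral.integral_symm] at this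
      linarith
  exact ((hasDerivAt_const (τ i) C).add hFTC).congr_of_eventuallyEq heq |>.congr_deriv (by ring)

/-- Lemma 1 of the paper: for a piecewise CDF with nondecreasing pieces
`F 1, …, F B` (values in `[0,1]`), `F (B+1) ≡ 0`, thresholds
`0 = τ (B+1) ≤ τ B ≤ … ≤ τ 1` with `τ (i+1) < τ i < τ (i-1)` (the upper constraint void
for `i = 1` since `τ 0 = +∞`), `F i` and `F (i+1)` continuous at `τ i`, and locally finite
first- and second-moment integrals, the functions `e1(τ) = ∫_0^∞ S(x;τ) dx` and
`e2(τ) = ∫_0^∞ 2x S(x;τ) dx` of the single threshold `τ i = τ` are differentiable at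
`τ = τ i` and `e2'(τ i) = 2 (τ i) e1'(τ i)`. -/
theorem deriv_second_moment_eq_two_tau_deriv_first_moment
    (B i : ℕ) (hB : 1 ≤ B) (hi1 : 1 ≤ i) (hiB : i ≤ B)
    (τ : ℕ → ℝ) (hτtop : τ (B + 1) = 0)
    (hmono : ∀ m, 1 ≤ m → m ≤ B → τ (m + 1) ≤ τ m)
    (hlt : τ (i + 1) < τ i) (hlt' : 1 < i → τ i < τ (i - 1))
    (F : ℕ → ℝ → ℝ)
    (hFmono : ∀ k, 1 ≤ k → k ≤ B → Monotone (F k))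
    (hF01 : ∀ k, 1 ≤ k → k ≤ B → ∀ x, F k x ∈ Set.Icc (0 : ℝ) 1)
    (hFtop : ∀ x, F (B + 1) x = 0)
    (hci : ContinuousAt (F i) (τ i))
    (hci' : ContinuousAt (F (i + 1)) (τ i))
    (hint1 : ∀ᶠ t in nhds (τ i),
      IntegrableOn (pwSurvival B (Function.update τ i t) F) (Set.Ioi 0))
    (hint2 : ∀ᶠ t in nhds (τ i),
      IntegrableOn (fun x => 2 * x * pwSurvival B (Function.update τ i t) F x)
        (Set.Ioi 0)) :
    ∃ d : ℝ,
      HasDerivAt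
        (fun t => ∫ x in Set.Ioi (0 : ℝ), pwSurvival B (Function.update τ i t) F x)
        d (τ i) ∧
      HasDerivAt
        (fun t => ∫ x in Set.Ioi (0 : ℝ),
          2 * x * pwSurvival B (Function.update τ i t) F x)
        (2 * τ i * d) (τ i) := by
  refine ⟨F i (τ i) - F (i + 1) (τ i), ?_, ?_⟩
  · have h := main_aux hi1 hiB hτtop hmono hlt hlt' F hFmono hFtop hci hci'
      (fun _ => (1 : ℝ)) continuous_const (by
        filter_upwards [hint1] with t h
        simpa [one_mul] using h)
    have hfun : (fun t => ∫ x in Set.Ioi (0 : ℝ), pwSurvival B (Function.update τ i t) F x)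
        = fun t => ∫ x in Set.Ioi (0 : ℝ),
            (fun _ => (1 : ℝ)) x * pwSurvival B (Function.update τ i t) F x := by
      simp only [one_mul]
    rw [hfun]
    simpa using h
  · have h := main_aux hi1 hiB hτtop hmono hlt hlt' F hFmono hFtop hci hci'
      (fun x => 2 * x) (by continuity) (by
        filter_upwards [hint2] with t h
        exact h)
    have : (2 : ℝ) * τ i * (F i (τ i) - F (i + 1) (τ i))
        = (fun x : ℝ => 2 * x) (τ i) * (F i (τ i) - F (i + 1) (τ i)) := rfl
    rw [this]
    exact h
end

section
/- Under the hypotheses of the preceding setup (piecewise CDF with nondecreasing pieces F_1,…,F_B, F_{B+1} ≡ 0, τ_{i+1} < τ_i < τ_{i−1}, F_i and F_{i+1} continuous at τ_i, and locally finite first-moment integrals), the function e1(τ) = ∫_0^∞ S(x;τ) dx (the expectation of X as a function of the single threshold τ_i = τ) is differentiable at τ = τ_i with derivative e1′(τ_i) = F_i(τ_i) − F_{i+1}(τ_i), which is nonnegative. -/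
open MeasureTheory

/-- If `k` is in the index set and every smaller candidate fails, the piecewise survival
function at `x` equals `1 - F k x`. -/
lemma pwSurvival_eq (B : ℕ) (τ : ℕ → ℝ) (F : ℕ → ℝ → ℝ) (x : ℝ) (k : ℕ)
    (hk1 : 1 ≤ k) (hk2 : k ≤ B + 1) (hle : τ k ≤ x)
    (hgt : ∀ m, 1 ≤ m → m < k → x < τ m) :
    pwSurvival B τ F x = 1 - F k x := by
  have hmem : k ∈ {m : ℕ | 1 ≤ m ∧ m ≤ B + 1 ∧ τ m ≤ x} := ⟨hk1, hk2, hle⟩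
  have : sInf {m : ℕ | 1 ≤ m ∧ m ≤ B + 1 ∧ τ m ≤ x} = k := by
    refine le_antisymm (Nat.sInf_le hmem) (le_csInf ⟨k, hmem⟩ ?_)
    rintro m ⟨hm1, hm2, hm3⟩
    by_contra h
    exact absurd hm3 (not_le.2 (hgt m hm1 (by omega)))
  rw [pwSurvival, this]

/-- under the hypotheses of the piecewise-CDF setup (the pieces combining
into the genuine, nondecreasing, CDF `x ↦ 1 - S(x; τ i)` of a random variable; `F i` and
`F (i+1)` continuous at `τ i`; locally finite first-moment integrals), the mean
`e1(τ) = ∫_0^∞ S(x;τ) dx`, as a function of the single threshold `τ i = τ`, is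
differentiable at `τ = τ i` with derivative `F i (τ i) - F (i+1) (τ i) ≥ 0`. -/
theorem deriv_first_moment (B i : ℕ) (hB : 1 ≤ B) (hi1 : 1 ≤ i) (hiB : i ≤ B)
    (τ : ℕ → ℝ) (hτtop : τ (B + 1) = 0)
    (hmono : ∀ m, 1 ≤ m → m ≤ B → τ (m + 1) ≤ τ m)
    (hlt : τ (i + 1) < τ i) (hlt' : 1 < i → τ i < τ (i - 1))
    (F : ℕ → ℝ → ℝ)
    (hFmono : ∀ k, 1 ≤ k → k ≤ B → Monotone (F k))
    (hF01 : ∀ k, 1 ≤ k → k ≤ B → ∀ x, F k x ∈ Set.Icc (0 : ℝ) 1)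
    (hFtop : ∀ x, F (B + 1) x = 0)
    (hCDF : Monotone (fun x => 1 - pwSurvival B τ F x))
    (hci : ContinuousAt (F i) (τ i))
    (hci' : ContinuousAt (F (i + 1)) (τ i))
    (hint1 : ∀ᶠ t in nhds (τ i),
      IntegrableOn (pwSurvival B (Function.update τ i t) F) (Set.Ioi 0)) :
    HasDerivAt
        (fun t => ∫ x in Set.Ioi (0 : ℝ), pwSurvival B (Function.update τ i t) F x)
        (F i (τ i) - F (i + 1) (τ i)) (τ i) ∧
      0 ≤ F i (τ i) - F (i + 1) (τ i) := by
  -- chain of inequalities between thresholds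
  have hchain : ∀ n m, 1 ≤ m → m ≤ n → n ≤ B + 1 → τ n ≤ τ m := by
    intro n
    induction n with
    | zero => intro m h1 h2 _; omega
    | succ n ih =>
      intro m h1 h2 h3
      rcases eq_or_lt_of_le h2 with h | h
      · exact le_of_eq (by rw [h])
      · exact le_trans (hmono n (by omega) (by omega)) (ih m h1 (by omega) (by omega))
  have ha0 : (0 : ℝ) ≤ τ (i + 1) := by
    rw [← hτtop]; exact hchain (B + 1) (i + 1) (by omega) (by omega) le_rfl
  set a : ℝ := τ (i + 1) with ha_def
  set b : ℝ := if 1 < i then τ (i - 1) else τ i + 1 with hb_def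
  have hτib : τ i < b := by
    rw [hb_def]
    split_ifs with h
    · exact hlt' h
    · linarith
  -- every index strictly below i has threshold at least b
  have hlow : ∀ m, 1 ≤ m → m < i → b ≤ τ m := by
    intro m h1 h2
    have h3 : 1 < i := by omega
    rw [hb_def, if_pos h3]
    exact hchain (i - 1) m h1 (by omega) (by omega)
  set g : ℝ → ℝ := fun x => F i x - F (i + 1) x with hg_def
  -- measurability of g
  have hgmF : Measurable (F i) := (hFmono i hi1 hiB).measurable
  have hgmF' : Measurable (F (i + 1)) := by
    rcases eq_or_lt_of_le hiB with h | h
    · have : F (i + 1) = fun _ => (0 : ℝ) := funext (by rw [h]; exact hFtop)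
      rw [this]; exact measurable_const
    · exact (hFmono (i + 1) (by omega) (by omega)).measurable
  have hgm : Measurable g := hgmF.sub hgmF'
  -- the survival function agrees for updated threshold whenever the membership of i agrees
  have hSeq : ∀ (t x : ℝ), (t ≤ x ↔ τ i ≤ x) →
      pwSurvival B (Function.update τ i t) F x = pwSurvival B τ F x := by
    intro t x hx
    have : {m : ℕ | 1 ≤ m ∧ m ≤ B + 1 ∧ Function.update τ i t m ≤ x}
        = {m : ℕ | 1 ≤ m ∧ m ≤ B + 1 ∧ τ m ≤ x} := by
      ext m
      by_cases hm : m = i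
      · subst hm
        simp only [Set.mem_setOf_eq, Function.update_self]
        exact and_congr_right fun _ => and_congr_right fun _ => hx
      · simp [Function.update_of_ne hm]
    rw [pwSurvival, pwSurvival, this]
  have hself : IntegrableOn (pwSurvival B τ F) (Set.Ioi 0) := by
    have := hint1.self_of_nhds
    rwa [Function.update_eq_self] at this
  -- key: local formula for the mean as a function of the threshold
  have key : ∀ᶠ t in nhds (τ i),
      (∫ x in Set.Ioi (0 : ℝ), pwSurvival B (Function.update τ i t) F x)
        = (∫ x in Set.Ioi (0 : ℝ), pwSurvival B τ F x) + ∫ x in (τ i)..t, g x := by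
    filter_upwards [hint1, Ioo_mem_nhds hlt hτib] with t hint ht
    obtain ⟨hta, htb⟩ := ht
    set τ' := Function.update τ i t with hτ'
    have hτ'i : τ' i = t := Function.update_self i t τ
    have hτ'ne : ∀ m, m ≠ i → τ' m = τ m := fun m hm => Function.update_of_ne hm t τ
    -- pointwise difference formula
    have hdiff : ∀ x, pwSurvival B τ' F x - pwSurvival B τ F x
        = Set.indicator (Set.Ico (min t (τ i)) (max t (τ i)))
            (fun x => if τ i ≤ t then g x else -g x) x := by
      intro x
      rcases le_total (τ i) t with hcase | hcase
      · rw [min_eq_right hcase, max_eq_left hcase]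
        by_cases hx : x ∈ Set.Ico (τ i) t
        · have hS : pwSurvival B τ F x = 1 - F i x := by
            refine pwSurvival_eq B τ F x i hi1 (by omega) hx.1 ?_
            intro m h1 h2
            exact lt_of_lt_of_le (lt_trans hx.2 htb) (hlow m h1 h2)
          have hS' : pwSurvival B τ' F x = 1 - F (i + 1) x := by
            refine pwSurvival_eq B τ' F x (i + 1) (by omega) (by omega) ?_ ?_
            · rw [hτ'ne (i + 1) (by omega)]
              exact le_trans (hmono i hi1 hiB) hx.1
            · intro m h1 h2
              by_cases hm : m = i
              · rw [hm, hτ'i]; exact hx.2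
              · rw [hτ'ne m hm]
                exact lt_of_lt_of_le (lt_trans hx.2 htb) (hlow m h1 (by omega))
          rw [hS, hS', Set.indicator_of_mem hx, if_pos hcase]
          ring
        · rw [Set.indicator_of_notMem hx]
          rw [hSeq t x ?_]
          · ring
          · simp only [Set.mem_Ico, not_and, not_lt] at hx
            constructor
            · intro h; exact le_trans hcase h
            · intro h; exact hx h
      · rw [min_eq_left hcase, max_eq_right hcase]
        by_cases hx : x ∈ Set.Ico t (τ i)
        · have hti : t < τ i := lt_of_le_of_lt hx.1 hx.2
          have hS : pwSurvival B τ F x = 1 - F (i + 1) x := by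
            refine pwSurvival_eq B τ F x (i + 1) (by omega) (by omega)
              (le_trans (le_of_lt hta) hx.1) ?_
            intro m h1 h2
            by_cases hm : m = i
            · rw [hm]; exact hx.2
            · exact lt_of_lt_of_le hx.2 (hchain i m h1 (by omega) (by omega))
          have hS' : pwSurvival B τ' F x = 1 - F i x := by
            refine pwSurvival_eq B τ' F x i hi1 (by omega) (by rw [hτ'i]; exact hx.1) ?_
            intro m h1 h2
            rw [hτ'ne m (by omega)]
            exact lt_of_lt_of_le hx.2 (hchain i m h1 (by omega) (by omega))
          rw [hS, hS', Set.indicator_of_mem hx, if_neg (not_le.2 hti)]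
          ring
        · rw [Set.indicator_of_notMem hx]
          rw [hSeq t x ?_]
          · ring
          · simp only [Set.mem_Ico, not_and, not_lt] at hx
            constructor
            · intro h; exact hx h
            · intro h; exact le_trans hcase h
      -- now compute the integral of the difference
    have hmin : (0 : ℝ) < min t (τ i) :=
      lt_min (lt_of_le_of_lt ha0 hta) (lt_of_le_of_lt ha0 hlt)
    have hsub : ∫ x in Set.Ioi (0 : ℝ), (pwSurvival B τ' F x - pwSurvival B τ F x)
        = (∫ x in Set.Ioi (0 : ℝ), pwSurvival B τ' F x)
          - ∫ x in Set.Ioi (0 : ℝ), pwSurvival B τ F x := integral_sub hint hself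
    have hind : ∫ x in Set.Ioi (0 : ℝ), (pwSurvival B τ' F x - pwSurvival B τ F x)
        = ∫ x in (τ i)..t, g x := by
      have hsubset : Set.Ico (min t (τ i)) (max t (τ i)) ⊆ Set.Ioi (0 : ℝ) :=
        fun x hx => lt_of_lt_of_le hmin hx.1
      rw [setIntegral_congr_fun measurableSet_Ioi (fun x _ => hdiff x),
        setIntegral_indicator measurableSet_Ico,
        Set.inter_eq_self_of_subset_right hsubset]
      rcases le_or_gt (τ i) t with hcase | hcase
      · rw [min_eq_right hcase, max_eq_left hcase]
        simp only [if_pos hcase]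
        rw [integral_Ico_eq_integral_Ioo, ← integral_Ioc_eq_integral_Ioo,
          intervalIntegral.integral_of_le hcase]
      · rw [min_eq_left (le_of_lt hcase), max_eq_right (le_of_lt hcase)]
        simp only [if_neg (not_le.2 hcase)]
        rw [integral_neg, integral_Ico_eq_integral_Ioo, ← integral_Ioc_eq_integral_Ioo,
          intervalIntegral.integral_symm, intervalIntegral.integral_of_le (le_of_lt hcase)]
    linarith [hsub, hind]
  -- differentiability
  have hgc : ContinuousAt g (τ i) := hci.sub hci'
  have hII : IntervalIntegrable g volume (τ i) (τ i) := by
    rw [intervalIntegrable_iff]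
    simp [Set.uIoc, Set.Ioc_self]
  have hmeasF : StronglyMeasurableAtFilter g (nhds (τ i)) :=
    ⟨Set.univ, Filter.univ_mem, (hgm.stronglyMeasurable).aestronglyMeasurable⟩
  have hideriv : HasDerivAt (fun t => ∫ x in (τ i)..t, g x) (g (τ i)) (τ i) :=
    intervalIntegral.integral_hasDerivAt_right hII hmeasF hgc
  have hD : HasDerivAt
      (fun t => (∫ x in Set.Ioi (0 : ℝ), pwSurvival B τ F x) + ∫ x in (τ i)..t, g x)
      (g (τ i)) (τ i) := hideriv.const_add _
  have hmain : HasDerivAt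
      (fun t => ∫ x in Set.Ioi (0 : ℝ), pwSurvival B (Function.update τ i t) F x)
      (g (τ i)) (τ i) := hD.congr_of_eventuallyEq key
  -- nonnegativity
  have hnonneg : 0 ≤ F i (τ i) - F (i + 1) (τ i) := by
    have hev : ∀ᶠ x in nhdsWithin (τ i) (Set.Iio (τ i)), F (i + 1) x ≤ F i (τ i) := by
      filter_upwards [Ioo_mem_nhdsLT hlt] with x hx
      have h1 : 1 - pwSurvival B τ F x = F (i + 1) x := by
        rw [pwSurvival_eq B τ F x (i + 1) (by omega) (by omega) (le_of_lt hx.1) ?_]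
        · ring
        · intro m h1 h2
          by_cases hm : m = i
          · rw [hm]; exact hx.2
          · exact lt_of_lt_of_le hx.2 (hchain i m h1 (by omega) (by omega))
      have h2 : 1 - pwSurvival B τ F (τ i) = F i (τ i) := by
        rw [pwSurvival_eq B τ F (τ i) i hi1 (by omega) le_rfl ?_]
        · ring
        · intro m h1 h2
          exact lt_of_lt_of_le hτib (hlow m h1 h2)
      have := hCDF (le_of_lt hx.2)
      simp only at this
      rw [h1, h2] at this
      exact this
    have hlim : Filter.Tendsto (F (i + 1)) (nhdsWithin (τ i) (Set.Iio (τ i)))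
        (nhds (F (i + 1) (τ i))) := hci'.tendsto.mono_left nhdsWithin_le_nhds
    have := le_of_tendsto hlim hev
    linarith
  exact ⟨hmain, hnonneg⟩
end

section
/- Under the hypotheses of the preceding setup (piecewise CDF with nondecreasing pieces F_1,…,F_B, F_{B+1} ≡ 0, τ_{i+1} < τ_i < τ_{i−1}, F_i and F_{i+1} continuous at τ_i, and locally finite second-moment integrals), the function e2(τ) = ∫_0^∞ 2x S(x;τ) dx (the second moment of X as a function of the single threshold τ_i = τ) is differentiable at τ = τ_i with derivative e2′(τ_i) = 2 τ_i (F_i(τ_i) − F_{i+1}(τ_i)). -/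
open MeasureTheory

/-- under the hypotheses of the piecewise-CDF setup (nondecreasing pieces
`F 1, …, F B` with values in `[0,1]`, `F (B+1) ≡ 0`, `τ (i+1) < τ i < τ (i-1)`, `F i` and
`F (i+1)` continuous at `τ i`, locally finite second-moment integrals), the second moment
`e2(τ) = ∫_0^∞ 2x S(x;τ) dx`, as a function of the single threshold `τ i = τ`, is
differentiable at `τ = τ i` with derivative `2 (τ i) (F i (τ i) - F (i+1) (τ i))`. -/
theorem deriv_second_moment (B i : ℕ) (hB : 1 ≤ B) (hi1 : 1 ≤ i) (hiB : i ≤ B)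
    (τ : ℕ → ℝ) (hτtop : τ (B + 1) = 0)
    (hmono : ∀ m, 1 ≤ m → m ≤ B → τ (m + 1) ≤ τ m)
    (hlt : τ (i + 1) < τ i) (hlt' : 1 < i → τ i < τ (i - 1))
    (F : ℕ → ℝ → ℝ)
    (hFmono : ∀ k, 1 ≤ k → k ≤ B → Monotone (F k))
    (hF01 : ∀ k, 1 ≤ k → k ≤ B → ∀ x, F k x ∈ Set.Icc (0 : ℝ) 1)
    (hFtop : ∀ x, F (B + 1) x = 0)
    (hci : ContinuousAt (F i) (τ i))
    (hci' : ContinuousAt (F (i + 1)) (τ i))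
    (hint2 : ∀ᶠ t in nhds (τ i),
      IntegrableOn (fun x => 2 * x * pwSurvival B (Function.update τ i t) F x)
        (Set.Ioi 0)) :
    HasDerivAt
      (fun t => ∫ x in Set.Ioi (0 : ℝ),
        2 * x * pwSurvival B (Function.update τ i t) F x)
      (2 * τ i * (F i (τ i) - F (i + 1) (τ i))) (τ i) := by
  -- nonnegativity of thresholds
  have key : ∀ d m, 1 ≤ m → m + d = B + 1 → 0 ≤ τ m := by
    intro d
    induction d with
    | zero =>
      intro m h1 h2
      have hm : m = B + 1 := by omega
      rw [hm, hτtop]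
    | succ n ih =>
      intro m h1 h2
      have h3 := ih (m + 1) (by omega) (by omega)
      have h4 := hmono m h1 (by omega)
      linarith
  have hτnn : 0 ≤ τ (i + 1) := key (B - i) (i + 1) (by omega) (by omega)
  have hτpos : 0 < τ i := lt_of_le_of_lt hτnn hlt
  have hanti : ∀ m m', 1 ≤ m → m ≤ m' → m' ≤ B + 1 → τ m' ≤ τ m := by
    intro m m' h1 h3
    induction m', h3 using Nat.le_induction with
    | base => intro _; exact le_refl _
    | succ n hn ih =>
      intro h2
      exact le_trans (hmono n (by omega) (by omega)) (ih (by omega))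
  set a : ℝ := (τ (i + 1) + τ i) / 2 with ha_def
  have ha1 : τ (i + 1) < a := by rw [ha_def]; linarith
  have ha2 : a < τ i := by rw [ha_def]; linarith
  have ha0 : 0 < a := by rw [ha_def]; linarith
  obtain ⟨b, hb1, hb2⟩ : ∃ b, τ i < b ∧ (1 < i → b ≤ τ (i - 1)) := by
    by_cases hc : 1 < i
    · exact ⟨(τ i + τ (i - 1)) / 2, by linarith [hlt' hc], fun _ => by linarith [hlt' hc]⟩
    · exact ⟨τ i + 1, by linarith, fun h => absurd h hc⟩
  -- sInf computation helper
  have hsinf : ∀ (σ : ℕ → ℝ) (x : ℝ) (k : ℕ), 1 ≤ k → k ≤ B + 1 → σ k ≤ x →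
      (∀ m, 1 ≤ m → m < k → x < σ m) →
      sInf {m : ℕ | 1 ≤ m ∧ m ≤ B + 1 ∧ σ m ≤ x} = k := by
    intro σ x k hk1 hk2 hmem hgt
    have hkmem : k ∈ {m : ℕ | 1 ≤ m ∧ m ≤ B + 1 ∧ σ m ≤ x} := ⟨hk1, hk2, hmem⟩
    refine le_antisymm (Nat.sInf_le hkmem) ?_
    have hin := Nat.sInf_mem (⟨k, hkmem⟩ : {m : ℕ | 1 ≤ m ∧ m ≤ B + 1 ∧ σ m ≤ x}.Nonempty)
    by_contra hcon
    push_neg at hcon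
    exact absurd hin.2.2 (not_le.mpr (hgt _ hin.1 hcon))
  -- the difference lemma
  have haux : ∀ u v : ℝ, τ (i + 1) < u → 0 < u → u ≤ v → (1 < i → v ≤ τ (i - 1)) →
      IntegrableOn (fun x => 2 * x * pwSurvival B (Function.update τ i u) F x) (Set.Ioi 0) →
      IntegrableOn (fun x => 2 * x * pwSurvival B (Function.update τ i v) F x) (Set.Ioi 0) →
      (∫ x in Set.Ioi (0 : ℝ), 2 * x * pwSurvival B (Function.update τ i v) F x)
        - (∫ x in Set.Ioi (0 : ℝ), 2 * x * pwSurvival B (Function.update τ i u) F x)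
        = ∫ x in u..v, 2 * x * (F i x - F (i + 1) x) := by
    intro u v h1 h0 huv hvb hIu hIv
    have hsub : Set.Ico u v ⊆ Set.Ioi 0 := fun x hx => lt_of_lt_of_le h0 hx.1
    have heq : Set.EqOn
        (fun x => 2 * x * pwSurvival B (Function.update τ i v) F x
          - 2 * x * pwSurvival B (Function.update τ i u) F x)
        ((Set.Ico u v).indicator (fun x => 2 * x * (F i x - F (i + 1) x)))
        (Set.Ioi 0) := by
      intro x hx
      by_cases hmem : x ∈ Set.Ico u v
      · rw [Set.indicator_of_mem hmem]
        have hxlt : ∀ m, 1 ≤ m → m < i → x < τ m := by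
          intro m hm1 hm2
          have h5 : τ (i - 1) ≤ τ m := hanti m (i - 1) hm1 (by omega) (by omega)
          have h6 : v ≤ τ (i - 1) := hvb (by omega)
          calc x < v := hmem.2
          _ ≤ τ m := le_trans h6 h5
        have e1 : pwSurvival B (Function.update τ i v) F x = 1 - F (i + 1) x := by
          simp only [pwSurvival]
          rw [hsinf (Function.update τ i v) x (i + 1) (by omega) (by omega) ?_ ?_]
          · rw [Function.update_of_ne (by omega : i + 1 ≠ i)]
            exact le_of_lt (lt_of_lt_of_le h1 hmem.1)
          · intro m hm1 hm2
            by_cases hmi : m = i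
            · rw [hmi, Function.update_self]; exact hmem.2
            · rw [Function.update_of_ne hmi]
              exact hxlt m hm1 (by omega)
        have e2 : pwSurvival B (Function.update τ i u) F x = 1 - F i x := by
          simp only [pwSurvival]
          rw [hsinf (Function.update τ i u) x i hi1 (by omega) ?_ ?_]
          · rw [Function.update_self]; exact hmem.1
          · intro m hm1 hm2
            rw [Function.update_of_ne (by omega : m ≠ i)]
            exact hxlt m hm1 hm2
        simp only [e1, e2]
        ring
      · rw [Set.indicator_of_notMem hmem]
        have hx' : x < u ∨ v ≤ x := by
          by_contra hcc
          push_neg at hcc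
          exact hmem ⟨hcc.1, hcc.2⟩
        have hsets : {m : ℕ | 1 ≤ m ∧ m ≤ B + 1 ∧ Function.update τ i v m ≤ x}
            = {m : ℕ | 1 ≤ m ∧ m ≤ B + 1 ∧ Function.update τ i u m ≤ x} := by
          ext m
          by_cases hmi : m = i
          · subst hmi
            simp only [Set.mem_setOf_eq, Function.update_self]
            rcases hx' with h | h
            · have h1' : ¬ v ≤ x := not_le.mpr (lt_of_lt_of_le h huv)
              have h2' : ¬ u ≤ x := not_le.mpr h
              simp [h1', h2']
            · have h2' : u ≤ x := le_trans huv h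
              simp [h, h2']
          · simp [Function.update_of_ne hmi]
        simp only [pwSurvival, hsets]
        ring
    calc (∫ x in Set.Ioi (0 : ℝ), 2 * x * pwSurvival B (Function.update τ i v) F x)
          - (∫ x in Set.Ioi (0 : ℝ), 2 * x * pwSurvival B (Function.update τ i u) F x)
        = ∫ x in Set.Ioi (0 : ℝ), (2 * x * pwSurvival B (Function.update τ i v) F x
            - 2 * x * pwSurvival B (Function.update τ i u) F x) := (integral_sub hIv hIu).symm
      _ = ∫ x in Set.Ioi (0 : ℝ),
            (Set.Ico u v).indicator (fun x => 2 * x * (F i x - F (i + 1) x)) x :=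
          setIntegral_congr_fun measurableSet_Ioi heq
      _ = ∫ x in Set.Ico u v, 2 * x * (F i x - F (i + 1) x) := by
          rw [integral_indicator measurableSet_Ico,
            Measure.restrict_restrict measurableSet_Ico,
            Set.inter_eq_left.mpr hsub]
      _ = ∫ x in Set.Ioc u v, 2 * x * (F i x - F (i + 1) x) := by
          exact setIntegral_congr_set Ico_ae_eq_Ioc
      _ = ∫ x in u..v, 2 * x * (F i x - F (i + 1) x) :=
          (intervalIntegral.integral_of_le huv).symm
  -- eventual equality
  have h0int := hint2.self_of_nhds
  have hev : (fun t => ∫ x in Set.Ioi (0 : ℝ), 2 * x * pwSurvival B (Function.update τ i t) F x)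
      =ᶠ[nhds (τ i)]
      (fun t => (∫ x in Set.Ioi (0 : ℝ),
          2 * x * pwSurvival B (Function.update τ i (τ i)) F x)
        + ∫ x in (τ i)..t, 2 * x * (F i x - F (i + 1) x)) := by
    filter_upwards [hint2, Ioo_mem_nhds ha2 hb1] with t hIt htm
    rcases le_total (τ i) t with hle | hle
    · have hd := haux (τ i) t hlt hτpos hle
        (fun hgt => le_trans (le_of_lt htm.2) (hb2 hgt)) h0int hIt
      linarith
    · have hd := haux t (τ i) (lt_trans ha1 htm.1) (lt_trans ha0 htm.1) hle
        (fun hgt => (hlt' hgt).le) hIt h0int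
      rw [intervalIntegral.integral_symm]
      linarith
  -- FTC
  have hm2 : Measurable (F (i + 1)) := by
    by_cases hc : i + 1 ≤ B
    · exact (hFmono _ (by omega) hc).measurable
    · have hc' : i + 1 = B + 1 := by omega
      rw [hc']
      have : F (B + 1) = fun _ => 0 := funext hFtop
      rw [this]
      exact measurable_const
  have hmeas : Measurable (fun x : ℝ => 2 * x * (F i x - F (i + 1) x)) :=
    (measurable_const.mul measurable_id).mul ((hFmono i hi1 hiB).measurable.sub hm2)
  have hFTC : HasDerivAt (fun t => ∫ x in (τ i)..t, 2 * x * (F i x - F (i + 1) x))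
      (2 * τ i * (F i (τ i) - F (i + 1) (τ i))) (τ i) := by
    have := intervalIntegral.integral_hasDerivAt_right
      (f := fun x : ℝ => 2 * x * (F i x - F (i + 1) x)) (a := τ i) (b := τ i)
      (by constructor <;> simp [Set.Ioc_self])
      (hmeas.stronglyMeasurable.stronglyMeasurableAtFilter)
      (((continuousAt_const.mul continuousAt_id).mul (hci.sub hci')))
    exact this
  have hG : HasDerivAt (fun t => (∫ x in Set.Ioi (0 : ℝ),
        2 * x * pwSurvival B (Function.update τ i (τ i)) F x)
      + ∫ x in (τ i)..t, 2 * x * (F i x - F (i + 1) x))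
      (2 * τ i * (F i (τ i) - F (i + 1) (τ i))) (τ i) := hFTC.const_add _
  exact hG.congr_of_eventuallyEq hev
end

section
/- Let μ > 0, B ≥ 1 an integer, j ∈ {0,…,B−1}, and 0 < τ_{B−1} ≤ … ≤ τ_1 < ∞ (no condition on the lowest threshold except 0 ≤ τ_B ≤ τ_{B−1}). Let S_j(x; τ_B) denote the survival function 1 − F_j(x) of the inter-update CDF with lowest threshold τ_B. If 0 ≤ τ_B ≤ τ_B′ ≤ τ_{B−1}, then S_j(x; τ_B) ≤ S_j(x; τ_B′) for all x, and consequently ∫_0^∞ S_j(x; τ_B) dx ≤ ∫_0^∞ S_j(x; τ_B′) dx, i.e., the mean inter-update time is nondecreasing in the threshold τ_B used at full battery. -/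
/-!
Raising the lowest threshold from `b` to `b'` only changes the inter-update CDF on `[b, b')`:
there, since every higher threshold is at least `b'`, the CDF for lowest threshold `b` is the
Erlang CDF `G_{B-j}`, while the one for `b'` is still `0`. The survival functions therefore
differ by `𝟙_{[b, b')} G_{B-j} ≥ 0`. This is a bounded function with bounded support, so the two
survival functions are integrable together or not at all, and the integrals compare either way.
-/

open MeasureTheory

open Set

section Erlang

variable {μ : ℝ}

theorem erlangCDF_nonneg (hμ : 0 ≤ μ) (m : ℤ) (t : ℝ) : 0 ≤ erlangCDF μ m t := by
  unfold erlangCDF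
  split_ifs with ht
  · exact le_rfl
  · exact zero_le_one
  · have hμt : 0 ≤ μ * t := mul_nonneg hμ (not_lt.mp ht)
    have hsum := Real.sum_le_exp_of_nonneg hμt m.toNat
    have : Real.exp (-(μ * t)) * Real.exp (μ * t) = 1 := by rw [← Real.exp_add]; simp
    nlinarith [Real.exp_pos (-(μ * t))]

theorem erlangCDF_le_one (hμ : 0 ≤ μ) (m : ℤ) (t : ℝ) : erlangCDF μ m t ≤ 1 := by
  unfold erlangCDF
  split_ifs with ht
  · exact zero_le_one
  · exact le_rfl
  · have hμt : 0 ≤ μ * t := mul_nonneg hμ (not_lt.mp ht)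
    have hsum : 0 ≤ ∑ k ∈ Finset.range m.toNat, (μ * t) ^ k / (k.factorial : ℝ) :=
      Finset.sum_nonneg fun k _ => by positivity
    nlinarith [mul_nonneg (Real.exp_pos (-(μ * t))).le hsum]

theorem measurable_erlangCDF (μ : ℝ) (m : ℤ) : Measurable (erlangCDF μ m) := by
  unfold erlangCDF
  refine Measurable.ite measurableSet_Iio measurable_const ?_
  exact Measurable.ite (MeasurableSet.const (m ≤ 0)) measurable_const (by fun_prop)

theorem integrableOn_erlangCDF_Ico (hμ : 0 ≤ μ) (m : ℤ) (a b : ℝ) :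
    IntegrableOn (erlangCDF μ m) (Ico a b) :=
  Measure.integrableOn_of_bounded (M := 1) measure_Ico_lt_top.ne
    (measurable_erlangCDF μ m).aestronglyMeasurable
    (ae_of_all _ fun t => by
      rw [Real.norm_of_nonneg (erlangCDF_nonneg hμ m t)]
      exact erlangCDF_le_one hμ m t)

end Erlang

theorem integral_mono_of_integrable_sub {α : Type*} [MeasurableSpace α] {ν : Measure α}
    {f g : α → ℝ} (hle : f ≤ᵐ[ν] g) (hsub : Integrable (g - f) ν) :
    ∫ x, f x ∂ν ≤ ∫ x, g x ∂ν := by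
  by_cases hf : Integrable f ν
  · exact integral_mono_ae hf (by simpa using hf.add hsub) hle
  · have hg : ¬ Integrable g ν := fun hg => hf (by simpa using hg.sub hsub)
    rw [integral_undef hf, integral_undef hg]

theorem antitoneOn_Icc_one_of_le_sub_one {β : Type*} [Preorder β] {n : ℕ} {τ : ℕ → β}
    (hmono : ∀ m, 2 ≤ m → m ≤ n → τ m ≤ τ (m - 1)) : AntitoneOn τ (Icc 1 n) :=
  antitoneOn_of_add_one_le ordConnected_Icc fun a _ ha ha' => by
    simpa using hmono (a + 1) (Nat.succ_le_succ ha.1) ha'.2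

section InterUpdate

variable {μ : ℝ} {B : ℕ} {τ : ℕ → ℝ} {j : ℕ} {x : ℝ}

theorem interUpdateCDF_of_lt (hx : x < τ B) : interUpdateCDF μ B τ j x = 0 :=
  if_pos hx

theorem interUpdateCDF_eq_erlangCDF (hB : 1 ≤ B) (hx : τ B ≤ x)
    (hupper : ∀ m, 1 ≤ m → m < B → x < τ m) :
    interUpdateCDF μ B τ j x = erlangCDF μ (B - j) x := by
  have hinf : sInf {m : ℕ | 1 ≤ m ∧ m ≤ B ∧ τ m ≤ x} = B := by
    refine le_antisymm (Nat.sInf_le ⟨hB, le_rfl, hx⟩) (le_csInf ⟨B, hB, le_rfl, hx⟩ ?_)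
    rintro m ⟨hm1, hmB, hmx⟩
    by_contra! hlt
    exact (hupper m hm1 hlt).not_ge hmx
  rw [interUpdateCDF, if_neg (not_lt.mpr hx), hinf]

theorem interUpdateCDF_update_congr {b b' : ℝ} (hb : b ≤ x) (hb' : b' ≤ x) :
    interUpdateCDF μ B (Function.update τ B b) j x
      = interUpdateCDF μ B (Function.update τ B b') j x := by
  have hset : {m : ℕ | 1 ≤ m ∧ m ≤ B ∧ Function.update τ B b m ≤ x}
      = {m : ℕ | 1 ≤ m ∧ m ≤ B ∧ Function.update τ B b' m ≤ x} := by
    ext m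
    rcases eq_or_ne m B with rfl | hm
    · simp [hb, hb']
    · simp [Function.update_of_ne hm]
  simp only [interUpdateCDF, Function.update_self, not_lt.mpr hb, not_lt.mpr hb', if_false, hset]

theorem interUpdateCDF_update_sub_update (hB : 1 ≤ B) {b b' : ℝ} (hbb' : b ≤ b')
    (hupper : ∀ m, 1 ≤ m → m < B → b' ≤ τ m) (x : ℝ) :
    interUpdateCDF μ B (Function.update τ B b) j x
        - interUpdateCDF μ B (Function.update τ B b') j x
      = (Ico b b').indicator (erlangCDF μ (B - j)) x := by
  by_cases hxb : x < b
  · rw [interUpdateCDF_of_lt (by simpa using hxb),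
      interUpdateCDF_of_lt (by simpa using hxb.trans_le hbb'),
      indicator_of_notMem fun h => h.1.not_gt hxb, sub_zero]
  by_cases hxb' : x < b'
  · have hx : x ∈ Ico b b' := ⟨not_lt.mp hxb, hxb'⟩
    rw [interUpdateCDF_of_lt (τ := Function.update τ B b') (by simpa using hxb'),
      indicator_of_mem hx, sub_zero]
    refine interUpdateCDF_eq_erlangCDF hB (by simpa using hx.1) fun m hm hmB => ?_
    rw [Function.update_of_ne hmB.ne]
    exact hxb'.trans_le (hupper m hm hmB)
  · rw [interUpdateCDF_update_congr (not_lt.mp hxb) (not_lt.mp hxb'), sub_self,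
      indicator_of_notMem fun h => hxb' h.2]

end InterUpdate

theorem mean_interupdate_mono_in_lowest_threshold_general (μ : ℝ) (hμ : 0 < μ)
    (B : ℕ) (hB : 1 ≤ B) (τ : ℕ → ℝ) (j : ℕ)
    (hmono : ∀ m, 2 ≤ m → m ≤ B - 1 → τ m ≤ τ (m - 1))
    (b b' : ℝ) (hbb' : b ≤ b') (hb'τ : 2 ≤ B → b' ≤ τ (B - 1)) :
    (∀ x, 1 - interUpdateCDF μ B (Function.update τ B b) j x
        ≤ 1 - interUpdateCDF μ B (Function.update τ B b') j x) ∧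
      ∫ x in Set.Ioi (0 : ℝ), (1 - interUpdateCDF μ B (Function.update τ B b) j x)
        ≤ ∫ x in Set.Ioi (0 : ℝ),
            (1 - interUpdateCDF μ B (Function.update τ B b') j x) := by
  have hupper : ∀ m, 1 ≤ m → m < B → b' ≤ τ m := fun m hm hmB =>
    (hb'τ (by omega)).trans <|
      antitoneOn_Icc_one_of_le_sub_one hmono ⟨hm, by omega⟩ ⟨by omega, le_rfl⟩ (by omega)
  have hdiff := interUpdateCDF_update_sub_update (μ := μ) (j := j) hB hbb' hupper
  have hsurv : ∀ x, 1 - interUpdateCDF μ B (Function.update τ B b) j x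
      ≤ 1 - interUpdateCDF μ B (Function.update τ B b') j x := fun x => by
    have := indicator_nonneg (fun t _ => erlangCDF_nonneg hμ.le (B - j) t) x (s := Ico b b')
    linarith [hdiff x]
  refine ⟨hsurv, integral_mono_of_integrable_sub (ae_of_all _ hsurv) ?_⟩
  have hsub : (fun x => 1 - interUpdateCDF μ B (Function.update τ B b') j x)
      - (fun x => 1 - interUpdateCDF μ B (Function.update τ B b) j x)
      = (Ico b b').indicator (erlangCDF μ (B - j)) := by
    ext x
    simp only [Pi.sub_apply, ← hdiff x]
    ring
  rw [hsub]
  exact ((integrableOn_erlangCDF_Ico hμ.le _ b b').integrable_indicator measurableSet_Ico).restrict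

/-- for `μ > 0`, `B ≥ 1`, upper thresholds `0 < τ (B-1) ≤ … ≤ τ 1 < ∞`,
`j ∈ {0,…,B-1}`, and two choices `0 ≤ b ≤ b' ≤ τ (B-1)` of the lowest threshold `τ B`,
the survival functions `S_j(·; b) = 1 - F_j(·; b)` of the inter-update CDF satisfy
`S_j(x; b) ≤ S_j(x; b')` for all `x`, and hence
`∫_0^∞ S_j(x; b) dx ≤ ∫_0^∞ S_j(x; b') dx`: the mean inter-update time is
nondecreasing in the threshold used at full battery. -/
theorem mean_interupdate_mono_in_lowest_threshold (μ : ℝ) (hμ : 0 < μ)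
    (B : ℕ) (hB : 1 ≤ B) (τ : ℕ → ℝ) (j : ℕ) (hj : j < B)
    (hpos : 2 ≤ B → 0 < τ (B - 1))
    (hmono : ∀ m, 2 ≤ m → m ≤ B - 1 → τ m ≤ τ (m - 1))
    (b b' : ℝ) (hb0 : 0 ≤ b) (hbb' : b ≤ b') (hb'τ : 2 ≤ B → b' ≤ τ (B - 1)) :
    (∀ x, 1 - interUpdateCDF μ B (Function.update τ B b) j x
        ≤ 1 - interUpdateCDF μ B (Function.update τ B b') j x) ∧
      ∫ x in Set.Ioi (0 : ℝ), (1 - interUpdateCDF μ B (Function.update τ B b) j x)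
        ≤ ∫ x in Set.Ioi (0 : ℝ),
            (1 - interUpdateCDF μ B (Function.update τ B b') j x) :=
  mean_interupdate_mono_in_lowest_threshold_general μ hμ B hB τ j hmono b b' hbb' hb'τ
end

section
/- Let μ > 0 and define, for 0 < α_2 ≤ α_1 < ∞, ρ_1(α_1) = e^{−α_1}/(1 − α_1 e^{−α_1}) and f(α_1, α_2) = ( α_2²/2 + e^{−α_2}[α_2 + 1 + ρ_1(α_2² + 2α_2 + 2)] − e^{−α_1}[α_1 + 1 + ρ_1(α_1² + α_1 + 1)] ) / ( α_2 + e^{−α_2}[1 + ρ_1(α_2 + 1)] − e^{−α_1}[1 + ρ_1 α_1] ), so that the average age of the B = 2 monotone threshold policy with thresholds τ_i = α_i/μ is Δ̄(α_1, α_2) = f(α_1, α_2)/μ. If (α_1*, α_2*) with 0 < α_2* < α_1* < ∞ is a global minimizer of f over the region {(α_1, α_2) : 0 < α_2 ≤ α_1 < ∞}, then α_2* = f(α_1*, α_2*); equivalently, the optimal lower threshold satisfies τ_2* = Δ̄(α_1*, α_2*), the minimum average age. -/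
/-!
For fixed `α1`, the average age `f(α1, ·)` is a quotient `N / D` whose numerator and denominator
satisfy `N'(x) = x D'(x)`. At an interior minimizer the quotient rule gives `N' D = N D'`, i.e.
`D'(α2) (α2 D(α2) - N(α2)) = 0`, and `D' > 0`, `D > 0` on `(0, ∞)`, so `α2 = N(α2) / D(α2)`.
-/

/-- `ρ1(α1) = e^(-α1) / (1 - α1 e^(-α1))`, the stationary probability of the empty
post-update battery state for `B = 2`. -/
noncomputable def rho1 (a1 : ℝ) : ℝ := Real.exp (-a1) / (1 - a1 * Real.exp (-a1))

/-- `f(α1, α2)` is `μ` times the time-average age of the `B = 2` monotone threshold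
policy with normalized thresholds `α1 = μ τ1 ≥ α2 = μ τ2` (Theorem 4 of the paper). -/
noncomputable def avgAgeB2 (a1 a2 : ℝ) : ℝ :=
  (a2 ^ 2 / 2
      + Real.exp (-a2) * (a2 + 1 + rho1 a1 * (a2 ^ 2 + 2 * a2 + 2))
      - Real.exp (-a1) * (a1 + 1 + rho1 a1 * (a1 ^ 2 + a1 + 1)))
    / (a2 + Real.exp (-a2) * (1 + rho1 a1 * (a2 + 1))
      - Real.exp (-a1) * (1 + rho1 a1 * a1))

open Real

theorem eq_div_of_isLocalExtr_div {N D : ℝ → ℝ} {x d : ℝ} (hN : HasDerivAt N (x * d) x)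
    (hD : HasDerivAt D d x) (hd : d ≠ 0) (hDx : D x ≠ 0)
    (hextr : IsLocalExtr (fun y => N y / D y) x) : x = N x / D x := by
  have hzero : (x * d * D x - N x * d) / D x ^ 2 = 0 := by
    rw [← (hN.div hD hDx).deriv]
    exact hextr.deriv_eq_zero
  have hfactor : d * (x * D x - N x) = 0 := by
    linear_combination (div_eq_zero_iff.mp hzero).resolve_right (pow_ne_zero 2 hDx)
  rw [eq_div_iff hDx]
  linear_combination (mul_eq_zero.mp hfactor).resolve_left hd

theorem exp_neg_mul_one_add_le_one (a : ℝ) : exp (-a) * (1 + a) ≤ 1 := by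
  rw [exp_neg, inv_mul_le_iff₀ (exp_pos a)]
  linarith [add_one_le_exp a]

theorem exp_neg_mul_one_add_lt_one {a : ℝ} (ha : a ≠ 0) : exp (-a) * (1 + a) < 1 := by
  rw [exp_neg, inv_mul_lt_iff₀ (exp_pos a)]
  linarith [add_one_lt_exp ha]

theorem mul_exp_neg_lt_one (a : ℝ) : a * exp (-a) < 1 := by
  linarith [exp_neg_mul_one_add_le_one a, exp_pos (-a)]

theorem rho1_mul_one_sub_mul_exp_neg (a : ℝ) : rho1 a * (1 - a * exp (-a)) = exp (-a) :=
  div_mul_cancel₀ _ (sub_pos.mpr (mul_exp_neg_lt_one a)).ne'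

theorem rho1_le_one (a : ℝ) : rho1 a ≤ 1 := by
  rw [rho1, div_le_one (sub_pos.mpr (mul_exp_neg_lt_one a))]
  linarith [exp_neg_mul_one_add_le_one a]

theorem exp_neg_mul_one_add_mul_lt_one {r x : ℝ} (hr : r ≤ 1) (hx : 0 < x) :
    exp (-x) * (1 + r * x) < 1 :=
  calc exp (-x) * (1 + r * x) ≤ exp (-x) * (1 + x) := by gcongr; nlinarith
    _ < 1 := exp_neg_mul_one_add_lt_one hx.ne'

-- `avgAgeB2 a1 x` unfolds to `ageNum a1 x / ageDen a1 x`.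
noncomputable def ageNum (a1 x : ℝ) : ℝ :=
  x ^ 2 / 2 + exp (-x) * (x + 1 + rho1 a1 * (x ^ 2 + 2 * x + 2))
    - exp (-a1) * (a1 + 1 + rho1 a1 * (a1 ^ 2 + a1 + 1))

noncomputable def ageDen (a1 x : ℝ) : ℝ :=
  x + exp (-x) * (1 + rho1 a1 * (x + 1)) - exp (-a1) * (1 + rho1 a1 * a1)

theorem hasDerivAt_ageDen (a1 x : ℝ) :
    HasDerivAt (ageDen a1) (1 - exp (-x) * (1 + rho1 a1 * x)) x := by
  have hpoly : HasDerivAt (fun y => 1 + rho1 a1 * (y + 1)) (rho1 a1) x := by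
    simpa using (((hasDerivAt_id x).add_const 1).const_mul (rho1 a1)).const_add 1
  refine (((hasDerivAt_id' x).add ((hasDerivAt_neg x).exp.mul hpoly)).sub_const
    (exp (-a1) * (1 + rho1 a1 * a1))).congr_deriv ?_
  ring

theorem hasDerivAt_ageNum (a1 x : ℝ) :
    HasDerivAt (ageNum a1) (x * (1 - exp (-x) * (1 + rho1 a1 * x))) x := by
  have hpoly : HasDerivAt (fun y => y + 1 + rho1 a1 * (y ^ 2 + 2 * y + 2))
      (1 + rho1 a1 * (2 * x + 2)) x := by
    refine (((hasDerivAt_id' x).add_const 1).add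
      ((((hasDerivAt_pow 2 x).add ((hasDerivAt_id' x).const_mul 2)).add_const 2).const_mul
        (rho1 a1))).congr_deriv ?_
    ring
  refine ((((hasDerivAt_pow 2 x).div_const 2).add ((hasDerivAt_neg x).exp.mul hpoly)).sub_const
    (exp (-a1) * (a1 + 1 + rho1 a1 * (a1 ^ 2 + a1 + 1)))).congr_deriv ?_
  ring

theorem ageDen_zero (a1 : ℝ) : ageDen a1 0 = 1 := by
  simp only [ageDen, neg_zero, exp_zero]
  linear_combination rho1_mul_one_sub_mul_exp_neg a1

theorem one_le_ageDen (a1 : ℝ) {x : ℝ} (hx : 0 ≤ x) : 1 ≤ ageDen a1 x := by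
  have hmono : MonotoneOn (ageDen a1) (Set.Ici 0) := by
    refine monotoneOn_of_hasDerivWithinAt_nonneg (convex_Ici 0)
      (fun y _ => (hasDerivAt_ageDen a1 y).continuousAt.continuousWithinAt)
      (fun y _ => (hasDerivAt_ageDen a1 y).hasDerivWithinAt) fun y hy => ?_
    rw [interior_Ici] at hy
    exact (sub_pos.mpr (exp_neg_mul_one_add_mul_lt_one (rho1_le_one a1) hy)).le
  simpa [ageDen_zero] using hmono Set.self_mem_Ici hx hx

theorem optimal_full_battery_threshold_eq_min_age_B2_general (μ : ℝ)
    (a1 a2 : ℝ) (ha2 : 0 < a2) (ha12 : a2 < a1)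
    (hmin : ∀ b1 b2 : ℝ, 0 < b2 → b2 ≤ b1 → avgAgeB2 a1 a2 ≤ avgAgeB2 b1 b2) :
    a2 = avgAgeB2 a1 a2 ∧ a2 / μ = avgAgeB2 a1 a2 / μ := by
  have hloc : IsLocalMin (avgAgeB2 a1) a2 :=
    Filter.mem_of_superset (Ioo_mem_nhds ha2 ha12) fun x hx => hmin a1 x hx.1 hx.2.le
  have hfix : a2 = avgAgeB2 a1 a2 :=
    eq_div_of_isLocalExtr_div (hasDerivAt_ageNum a1 a2) (hasDerivAt_ageDen a1 a2)
      (sub_pos.mpr (exp_neg_mul_one_add_mul_lt_one (rho1_le_one a1) ha2)).ne'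
      (zero_lt_one.trans_le (one_le_ageDen a1 ha2.le)).ne' hloc.isExtr
  exact ⟨hfix, congrArg (· / μ) hfix⟩

/-- Theorem 3 of the paper, specialized to `B = 2` via the closed form of
Theorem 4: if `(α1*, α2*)` with `0 < α2* < α1* < ∞` is a global minimizer of
`f = avgAgeB2` over `{(α1, α2) : 0 < α2 ≤ α1 < ∞}`, then `α2* = f(α1*, α2*)`;
equivalently, the optimal lower threshold `τ2* = α2*/μ` equals the minimum average age
`Δ̄ = f(α1*, α2*)/μ`. -/
theorem optimal_full_battery_threshold_eq_min_age_B2 (μ : ℝ) (hμ : 0 < μ)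
    (a1 a2 : ℝ) (ha2 : 0 < a2) (ha12 : a2 < a1)
    (hmin : ∀ b1 b2 : ℝ, 0 < b2 → b2 ≤ b1 → avgAgeB2 a1 a2 ≤ avgAgeB2 b1 b2) :
    a2 = avgAgeB2 a1 a2 ∧ a2 / μ = avgAgeB2 a1 a2 / μ :=
  optimal_full_battery_threshold_eq_min_age_B2_general μ a1 a2 ha2 ha12 hmin
end
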